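/- arXiv:1201.5976 — 2 statements merged into one kernel-verified Lean document; each statement's English description precedes it below -/
import Mathlib

section
/- Let Θ_i := θ_i I_n for inner scalar functions θ_i (i ∈ J). Then the greatest common left inner divisor of the family {Θ_i} equals the greatest common right inner divisor and equals θ_d I_n, where θ_d = GCD{θ_i : i ∈ J}; similarly the least common left inner multiple equals the least common right inner multiple and equals θ_m I_n where θ_m = LCM{θ_i}. -/
open MeasureTheory Complex Real InnerProductSpace Submodule

set_option maxHeartbeats 1000000
set_option synthInstance.maxHeartbeats 200000

noncomputable section

namespace BlockToeplitz

instance fact2pi : Fact (0 < 2 * π) := ⟨by positivity⟩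

/-- The unit circle, as the additive circle `ℝ / 2πℤ`. -/
abbrev 𝕋 : Type := AddCircle (2 * π)

/-- Normalized Haar (Lebesgue) measure on the circle. -/
abbrev μ𝕋 : Measure 𝕋 := AddCircle.haarAddCircle

section Pointwise

variable {E F : Type*} [NormedAddCommGroup E] [NormedSpace ℂ E]
  [NormedAddCommGroup F] [NormedSpace ℂ F]

theorem memLp_pointwise {Φ : 𝕋 → (E →L[ℂ] F)} (hm : AEStronglyMeasurable Φ μ𝕋)
    {C : ℝ} (hC : ∀ x, ‖Φ x‖ ≤ C) (f : Lp E 2 μ𝕋) :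
    MemLp (fun x => Φ x (f x)) 2 μ𝕋 := by
  refine MemLp.of_le_mul (c := C) (Lp.memLp f) ?_ ?_
  · exact isBoundedBilinearMap_apply.continuous.comp_aestronglyMeasurable
      (hm.prodMk (Lp.aestronglyMeasurable f))
  · refine Filter.Eventually.of_forall fun x => ?_
    exact (ContinuousLinearMap.le_opNorm _ _).trans
      (mul_le_mul_of_nonneg_right (hC x) (norm_nonneg _))

/-- The operator on `L²` of pointwise application of a uniformly bounded family of
operators (e.g. multiplication by an `L^∞` matrix function). -/
def pointwiseCLM (Φ : 𝕋 → (E →L[ℂ] F)) (hm : AEStronglyMeasurable Φ μ𝕋)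
    {C : ℝ} (hC : ∀ x, ‖Φ x‖ ≤ C) : Lp E 2 μ𝕋 →L[ℂ] Lp F 2 μ𝕋 :=
  LinearMap.mkContinuous
    { toFun := fun f => (memLp_pointwise hm hC f).toLp _
      map_add' := fun f g => by
        rw [← MemLp.toLp_add (memLp_pointwise hm hC f) (memLp_pointwise hm hC g)]
        refine MemLp.toLp_congr _ _ ?_
        filter_upwards [Lp.coeFn_add f g] with x hx
        simp only [hx, Pi.add_apply, map_add]
      map_smul' := fun c f => by
        try dsimp only
        rw [RingHom.id_apply, ← MemLp.toLp_const_smul c (memLp_pointwise hm hC f)]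
        refine MemLp.toLp_congr _ _ ?_
        filter_upwards [Lp.coeFn_smul c f] with x hx
        simp only [hx, Pi.smul_apply, ContinuousLinearMap.map_smul] }
    (max C 0)
    (by
      intro f
      simp only [LinearMap.coe_mk, AddHom.coe_mk]
      rw [Lp.norm_toLp]
      have hb : eLpNorm (fun x => Φ x (f x)) 2 μ𝕋
          ≤ ENNReal.ofReal (max C 0) * eLpNorm (f : 𝕋 → E) 2 μ𝕋 := by
        refine eLpNorm_le_mul_eLpNorm_of_ae_le_mul ?_ 2
        refine Filter.Eventually.of_forall fun x => ?_
        exact (ContinuousLinearMap.le_opNorm _ _).trans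
          (mul_le_mul_of_nonneg_right ((hC x).trans (le_max_left _ _)) (norm_nonneg _))
      calc (eLpNorm (fun x => Φ x (f x)) 2 μ𝕋).toReal
          ≤ (ENNReal.ofReal (max C 0) * eLpNorm (f : 𝕋 → E) 2 μ𝕋).toReal := by
            refine ENNReal.toReal_mono ?_ hb
            exact ENNReal.mul_ne_top ENNReal.ofReal_ne_top (Lp.eLpNorm_ne_top f)
        _ = max C 0 * ‖f‖ := by
            rw [ENNReal.toReal_mul, ENNReal.toReal_ofReal (le_max_right C 0), Lp.norm_def])

@[simp] theorem pointwiseCLM_apply (Φ : 𝕋 → (E →L[ℂ] F)) (hm : AEStronglyMeasurable Φ μ𝕋)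
    {C : ℝ} (hC : ∀ x, ‖Φ x‖ ≤ C) (f : Lp E 2 μ𝕋) :
    pointwiseCLM Φ hm hC f = (memLp_pointwise hm hC f).toLp _ := rfl

end Pointwise

end BlockToeplitz

namespace BlockToeplitz
open scoped ComplexConjugate

variable {ι : Type} [Fintype ι]

/-- `ℂ^ι`. -/
abbrev V (ι : Type) [Fintype ι] : Type := EuclideanSpace ℂ ι

/-- The space `L²(𝕋, ℂ^ι)`. -/
abbrev L2 (ι : Type) [Fintype ι] : Type := Lp (V ι) 2 μ𝕋

/-- The vector-valued trigonometric monomial `z^k ⊗ e_i` as an element of `L²`. -/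
def fourierV (ι : Type) [Fintype ι] [DecidableEq ι] (k : ℤ) (i : ι) : L2 ι :=
  (ContinuousMap.toLp (E := V ι) 2 μ𝕋 ℂ)
    ⟨fun x => fourier k x • EuclideanSpace.single i 1,
      (map_continuous (fourier k)).smul continuous_const⟩

/-- The span of the analytic-negative monomials. -/
def negSpan (ι : Type) [Fintype ι] : Submodule ℂ (L2 ι) :=
  Submodule.span ℂ
    {f | ∃ k : ℤ, k < 0 ∧ ∃ i : ι, f = @fourierV ι _ (Classical.decEq ι) k i}

/-- The vector-valued Hardy space `H²(𝕋, ℂ^ι)`, i.e. the orthogonal complement in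
`L²` of the span of the monomials `z^k ⊗ e_i`, `k < 0`. -/
def hardy (ι : Type) [Fintype ι] : Submodule ℂ (L2 ι) := (negSpan ι)ᗮ

/-- The Hardy space as a Hilbert space. -/
abbrev H2 (ι : Type) [Fintype ι] : Type := ↥(hardy ι)

instance : CompleteSpace (H2 ι) := by
  unfold H2 hardy; infer_instance

instance : HasOrthogonalProjection (hardy ι) := by
  unfold hardy; infer_instance

/-- The orthogonal projection `P` of `L²` onto `H²`. -/
def hardyProj (ι : Type) [Fintype ι] : L2 ι →L[ℂ] H2 ι :=
  orthogonalProjection (hardy ι)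

/-- A matrix-valued `L^∞` function on the circle (the matrices being identified with the
operators on `ℂ^ι` that they induce): a bounded measurable family of operators. -/
structure Symbol (ι : Type) [Fintype ι] : Type where
  toFun : 𝕋 → (V ι →L[ℂ] V ι)
  meas : AEStronglyMeasurable toFun μ𝕋
  bound : ℝ
  le_bound : ∀ x, ‖toFun x‖ ≤ bound

instance : CoeFun (Symbol ι) (fun _ => 𝕋 → (V ι →L[ℂ] V ι)) := ⟨Symbol.toFun⟩

/-- The multiplication operator `f ↦ Φ f` on `L²(𝕋, ℂ^ι)`. -/
def Symbol.mulLp (Φ : Symbol ι) : L2 ι →L[ℂ] L2 ι :=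
  pointwiseCLM Φ.toFun Φ.meas Φ.le_bound

/-- Pointwise product (composition) of two matrix symbols. -/
def Symbol.mul (Φ Ψ : Symbol ι) : Symbol ι where
  toFun := fun x => (Φ x).comp (Ψ x)
  meas := isBoundedBilinearMap_comp.continuous.comp_aestronglyMeasurable
    (Φ.meas.prodMk Ψ.meas)
  bound := max Φ.bound 0 * max Ψ.bound 0
  le_bound := fun x => (ContinuousLinearMap.opNorm_comp_le _ _).trans <|
    mul_le_mul ((Φ.le_bound x).trans (le_max_left _ _))
      ((Ψ.le_bound x).trans (le_max_left _ _)) (norm_nonneg _) (le_max_right _ _)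

/-- The pointwise adjoint symbol `Φ*` (conjugate transpose). -/
def Symbol.star (Φ : Symbol ι) : Symbol ι where
  toFun := fun x => ContinuousLinearMap.adjoint (Φ x)
  meas := (ContinuousLinearMap.adjoint (𝕜 := ℂ) (E := V ι)
      (F := V ι)).continuous.comp_aestronglyMeasurable Φ.meas
  bound := Φ.bound
  le_bound := fun x =>
    le_trans
      (le_of_eq ((ContinuousLinearMap.adjoint (𝕜 := ℂ) (E := V ι) (F := V ι)).norm_map (Φ.toFun x)))
      (Φ.le_bound x)

end BlockToeplitz

namespace BlockToeplitz
open scoped ComplexConjugate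

theorem norm_fourier_apply (k : ℤ) (x : 𝕋) : ‖fourier k x‖ = 1 := by
  rw [fourier_apply]; exact Circle.norm_coe _

section CompNeg

variable {E : Type*} [NormedAddCommGroup E] [NormedSpace ℂ E]

/-- The composition operator `f(z) ↦ f(z̄)` (i.e. `x ↦ -x` on the additive circle)
on `L²`. -/
def compNeg (E : Type*) [NormedAddCommGroup E] [NormedSpace ℂ E] :
    Lp E 2 μ𝕋 →L[ℂ] Lp E 2 μ𝕋 :=
  LinearMap.mkContinuous
    { toFun := fun f =>
        Lp.compMeasurePreserving (E := E) (p := 2) Neg.neg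
          (Measure.measurePreserving_neg μ𝕋) f
      map_add' := fun f g => by
        exact map_add (Lp.compMeasurePreserving Neg.neg (Measure.measurePreserving_neg μ𝕋)) f g
      map_smul' := fun c f => by
        apply Lp.ext
        have h1 := Lp.coeFn_compMeasurePreserving (μ := μ𝕋) (c • f)
          (Measure.measurePreserving_neg μ𝕋)
        have h2 := Lp.coeFn_compMeasurePreserving (μ := μ𝕋) f
          (Measure.measurePreserving_neg μ𝕋)
        have h3 : ((c • f : Lp E 2 μ𝕋) : 𝕋 → E) ∘ Neg.neg
            =ᵐ[μ𝕋] ((c • (f : 𝕋 → E)) ∘ Neg.neg) :=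
          (Measure.measurePreserving_neg μ𝕋).quasiMeasurePreserving.ae_eq_comp
            (Lp.coeFn_smul c f)
        filter_upwards [h1, h3,
          Lp.coeFn_smul c (Lp.compMeasurePreserving (E := E) (p := 2) Neg.neg
            (Measure.measurePreserving_neg μ𝕋) f), h2]
          with x hx1 hx3 hx4 hx2
        rw [RingHom.id_apply, hx1, hx3, hx4]
        show c • (f : 𝕋 → E) (-x)
            = c • (Lp.compMeasurePreserving (E := E) (p := 2) Neg.neg
                (Measure.measurePreserving_neg μ𝕋) f : 𝕋 → E) x
        rw [hx2]
        rfl }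
    1
    (fun f => by
      simpa using (Lp.norm_compMeasurePreserving (E := E) (p := 2) f
        (Measure.measurePreserving_neg μ𝕋)).le)

/-- The unitary operator `J f (z) = z̄ f(z̄)` on `L²`. -/
def Jop (E : Type*) [NormedAddCommGroup E] [NormedSpace ℂ E] :
    Lp E 2 μ𝕋 →L[ℂ] Lp E 2 μ𝕋 :=
  (pointwiseCLM (fun x => (fourier (-1) x : ℂ) • (1 : E →L[ℂ] E))
      (((map_continuous (fourier (-1))).smul continuous_const).aestronglyMeasurable)
      (C := 1)
      (fun x => by
        show ‖(fourier (-1)) x • (1 : E →L[ℂ] E)‖ ≤ 1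
        rw [norm_smul ((fourier (-1)) x) (1 : E →L[ℂ] E), norm_fourier_apply, one_mul,
          ContinuousLinearMap.one_def]
        exact ContinuousLinearMap.norm_id_le)).comp (compNeg E)

end CompNeg

end BlockToeplitz

namespace BlockToeplitz
open scoped ComplexConjugate

variable {ι : Type} [Fintype ι]

/-- The pointwise transposed-conjugated-reflected symbol `Φ̃(z) := Φ(z̄)*`. -/
def Symbol.tilde (Φ : Symbol ι) : Symbol ι where
  toFun := fun x => ContinuousLinearMap.adjoint (Φ.toFun (-x))
  meas := (ContinuousLinearMap.adjoint (𝕜 := ℂ) (E := V ι)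
      (F := V ι)).continuous.comp_aestronglyMeasurable
    (Φ.meas.comp_quasiMeasurePreserving
      (Measure.measurePreserving_neg μ𝕋).quasiMeasurePreserving)
  bound := Φ.bound
  le_bound := fun x =>
    le_trans
      (le_of_eq
        ((ContinuousLinearMap.adjoint (𝕜 := ℂ) (E := V ι) (F := V ι)).norm_map (Φ.toFun (-x))))
      (Φ.le_bound (-x))

/-- A matrix symbol belongs to `H^∞` iff multiplication by it leaves the Hardy space
invariant. -/
def Symbol.MemHinf (Φ : Symbol ι) : Prop :=
  ∀ f : L2 ι, f ∈ hardy ι → Φ.mulLp f ∈ hardy ι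

/-- A matrix `H^∞` symbol is inner if `Θ(z)*Θ(z) = I` a.e. -/
def Symbol.IsInner (Φ : Symbol ι) : Prop :=
  Φ.MemHinf ∧ ∀ᵐ x ∂μ𝕋, (ContinuousLinearMap.adjoint (Φ.toFun x)).comp (Φ.toFun x) = 1

/-- The block Toeplitz operator `T_Φ = P (Φ ·)` on the vector Hardy space. -/
def toeplitz (Φ : Symbol ι) : H2 ι →L[ℂ] H2 ι :=
  (hardyProj ι).comp (Φ.mulLp.comp (hardy ι).subtypeL)

/-- The block Hankel operator `H_Φ = J P^⊥ (Φ ·)`, viewed as an operator from `H²` to `H²`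
(its image indeed lies in `H²`). -/
def hankel (Φ : Symbol ι) : H2 ι →L[ℂ] H2 ι :=
  (hardyProj ι).comp <|
    (Jop (V ι)).comp <|
      (ContinuousLinearMap.id ℂ (L2 ι) - (hardy ι).subtypeL.comp (hardyProj ι)).comp <|
        Φ.mulLp.comp (hardy ι).subtypeL

/-- The image `Θ · H²` of the Hardy space under multiplication by a symbol. -/
def Symbol.rangeH2 (Φ : Symbol ι) : Submodule ℂ (L2 ι) :=
  (hardy ι).map (Φ.mulLp : L2 ι →ₗ[ℂ] L2 ι)

/-- The model space `H(Θ) := H² ⊖ Θ H²`. -/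
def modelSpace (Θ : Symbol ι) : Submodule ℂ (L2 ι) :=
  hardy ι ⊓ (Θ.rangeH2)ᗮ

/-- A scalar-valued `L^∞` function on the circle. -/
structure SymbolS : Type where
  toFun : 𝕋 → ℂ
  meas : AEStronglyMeasurable toFun μ𝕋
  bound : ℝ
  le_bound : ∀ x, ‖toFun x‖ ≤ bound

instance : CoeFun SymbolS (fun _ => 𝕋 → ℂ) := ⟨SymbolS.toFun⟩

/-- Scalar symbols embed into matrix symbols as `φ I_n`. -/
def SymbolS.toMatrix (φ : SymbolS) (ι : Type) [Fintype ι] : Symbol ι where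
  toFun := fun x => φ.toFun x • (1 : V ι →L[ℂ] V ι)
  meas := φ.meas.smul aestronglyMeasurable_const
  bound := φ.bound
  le_bound := fun x => by
    have h0 : (0 : ℝ) ≤ φ.bound := le_trans (norm_nonneg _) (φ.le_bound 0)
    calc ‖φ.toFun x • (1 : V ι →L[ℂ] V ι)‖ ≤ ‖φ.toFun x‖ * ‖(1 : V ι →L[ℂ] V ι)‖ :=
          ContinuousLinearMap.opNorm_smul_le _ _
      _ ≤ φ.bound * 1 := by
          refine mul_le_mul (φ.le_bound x) ?_ (norm_nonneg _) h0
          rw [ContinuousLinearMap.one_def]; exact ContinuousLinearMap.norm_id_le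
      _ = φ.bound := mul_one _

/-- The scalar-valued `L²` space of the circle. -/
abbrev L2S : Type := Lp ℂ 2 μ𝕋

/-- The span of the negative trigonometric monomials. -/
def negSpanS : Submodule ℂ L2S :=
  Submodule.span ℂ {f | ∃ k : ℤ, k < 0 ∧ f = fourierLp 2 k}

/-- The scalar Hardy space `H²(𝕋)`. -/
def hardyS : Submodule ℂ L2S := negSpanSᗮ

/-- The scalar Hardy space as a Hilbert space. -/
abbrev H2S : Type := ↥hardyS

instance : CompleteSpace H2S := by unfold H2S hardyS; infer_instance

instance : HasOrthogonalProjection hardyS := by unfold hardyS; infer_instance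

/-- The Szegő (Riesz) projection `P : L² → H²`. -/
def hardyProjS : L2S →L[ℂ] H2S := orthogonalProjection hardyS

/-- Multiplication by a scalar `L^∞` function, as an operator on `L²(𝕋)`. -/
def SymbolS.mulLp (φ : SymbolS) : L2S →L[ℂ] L2S :=
  pointwiseCLM (fun x => φ.toFun x • (1 : ℂ →L[ℂ] ℂ))
    (φ.meas.smul aestronglyMeasurable_const)
    (C := φ.bound)
    (fun x => by
      calc ‖φ.toFun x • (1 : ℂ →L[ℂ] ℂ)‖ ≤ ‖φ.toFun x‖ * ‖(1 : ℂ →L[ℂ] ℂ)‖ :=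
            ContinuousLinearMap.opNorm_smul_le _ _
        _ = ‖φ.toFun x‖ := by rw [norm_one, mul_one]
        _ ≤ φ.bound := φ.le_bound x)

/-- The scalar Toeplitz operator `T_φ` on `H²`. -/
def toeplitzS (φ : SymbolS) : H2S →L[ℂ] H2S :=
  hardyProjS.comp (φ.mulLp.comp hardyS.subtypeL)

/-- The scalar Hankel operator `H_φ = J P^⊥ (φ ·)` on `H²`. -/
def hankelS (φ : SymbolS) : H2S →L[ℂ] H2S :=
  hardyProjS.comp <|
    (Jop ℂ).comp <|
      (ContinuousLinearMap.id ℂ L2S - hardyS.subtypeL.comp hardyProjS).comp <|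
        φ.mulLp.comp hardyS.subtypeL

/-- Pointwise product of scalar symbols. -/
def SymbolS.mul (φ ψ : SymbolS) : SymbolS where
  toFun := fun x => φ.toFun x * ψ.toFun x
  meas := φ.meas.mul ψ.meas
  bound := max φ.bound 0 * max ψ.bound 0
  le_bound := fun x => by
    rw [norm_mul]
    exact mul_le_mul ((φ.le_bound x).trans (le_max_left _ _))
      ((ψ.le_bound x).trans (le_max_left _ _)) (norm_nonneg _) (le_max_right _ _)

/-- The complex-conjugate symbol `φ̄`. -/
def SymbolS.conj (φ : SymbolS) : SymbolS where
  toFun := fun x => conj (φ.toFun x)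
  meas := Complex.continuous_conj.comp_aestronglyMeasurable φ.meas
  bound := φ.bound
  le_bound := fun x => le_trans (le_of_eq (RCLike.norm_conj _)) (φ.le_bound x)

/-- The reflected conjugate symbol `φ̃(z) := conj (φ(z̄))`. -/
def SymbolS.tilde (φ : SymbolS) : SymbolS where
  toFun := fun x => conj (φ.toFun (-x))
  meas := Complex.continuous_conj.comp_aestronglyMeasurable
    (φ.meas.comp_quasiMeasurePreserving
      (Measure.measurePreserving_neg μ𝕋).quasiMeasurePreserving)
  bound := φ.bound
  le_bound := fun x => le_trans (le_of_eq (RCLike.norm_conj _)) (φ.le_bound (-x))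

/-- A scalar symbol is in `H^∞` iff multiplication by it preserves `H²`. -/
def SymbolS.MemHinf (φ : SymbolS) : Prop :=
  ∀ f : L2S, f ∈ hardyS → φ.mulLp f ∈ hardyS

/-- A scalar inner function: an `H^∞` function which is unimodular a.e. on the circle. -/
def SymbolS.IsInner (φ : SymbolS) : Prop :=
  φ.MemHinf ∧ ∀ᵐ x ∂μ𝕋, ‖φ.toFun x‖ = 1

/-- The image `θ · H²` of the Hardy space under a scalar multiplication operator. -/
def SymbolS.rangeH2 (φ : SymbolS) : Submodule ℂ L2S :=
  hardyS.map (φ.mulLp : L2S →ₗ[ℂ] L2S)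

/-- The scalar model space `H(θ) = H² ⊖ θH²`. -/
def modelSpaceS (θ : SymbolS) : Submodule ℂ L2S :=
  hardyS ⊓ (θ.rangeH2)ᗮ

/-- The coordinate function `z` on the circle (i.e. `x ↦ e^{ix}`). -/
def circleCoord : 𝕋 → ℂ := fun x => fourier 1 x

/-- The symbol `z` of the unilateral shift. -/
def shiftSymbolS : SymbolS where
  toFun := circleCoord
  meas := (map_continuous (fourier 1)).aestronglyMeasurable
  bound := 1
  le_bound := fun x => le_of_eq (norm_fourier_apply 1 x)

/-- The symbol `z̄`. -/
def coshiftSymbolS : SymbolS where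
  toFun := fun x => fourier (-1) x
  meas := (map_continuous (fourier (-1))).aestronglyMeasurable
  bound := 1
  le_bound := fun x => le_of_eq (norm_fourier_apply (-1) x)

/-- An operator on a complex Hilbert space is hyponormal if its self-commutator
`[T*, T] = T*T - TT*` is a positive operator. -/
def Hyponormal {H : Type*} [NormedAddCommGroup H] [InnerProductSpace ℂ H] [CompleteSpace H]
    (T : H →L[ℂ] H) : Prop :=
  (ContinuousLinearMap.adjoint T ∘L T - T ∘L ContinuousLinearMap.adjoint T).IsPositive

/-- A Blaschke factor `b_a(z) = (z - a)/(1 - āz)`. -/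
def blaschke (a z : ℂ) : ℂ := (z - a) / (1 - conj a * z)

end BlockToeplitz

/-!
Multiplication by `θ I_n` acts coordinatewise, so `(θ I_n) H²(ℂⁿ)` is the space of
`L²(ℂⁿ)`-functions all of whose coordinates lie in `θ H²`. Taking this "coordinatewise" subspace
commutes with intersections and with closed spans, which gives the left versions. The right
versions follow by transport along the conjugate-linear involution `f(z) ↦ conj (f (z̄))` of `L²`:
it fixes every `z^k`, hence preserves `H²`, and carries `θ H²` onto `θ̃ H²`.
-/

namespace BlockToeplitz

open scoped ComplexInnerProductSpace ComplexConjugate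

theorem _root_.Submodule.mem_orthogonal_span_iff {𝕜 E : Type*} [RCLike 𝕜] [NormedAddCommGroup E]
    [InnerProductSpace 𝕜 E] {s : Set E} {f : E} :
    f ∈ (span 𝕜 s)ᗮ ↔ ∀ v ∈ s, inner 𝕜 f v = 0 := by
  rw [← span_singleton_le_iff_mem, ← isOrtho_iff_le, isOrtho_span]
  simp

theorem mem_hardyS_iff {f : L2S} : f ∈ hardyS ↔ ∀ k : ℤ, k < 0 → ⟪f, fourierLp 2 k⟫ = 0 := by
  rw [hardyS, negSpanS, mem_orthogonal_span_iff]
  constructor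
  · exact fun h k hk => h _ ⟨k, hk, rfl⟩
  · rintro h _ ⟨k, hk, rfl⟩
    exact h k hk

theorem SymbolS.coeFn_mulLp (φ : SymbolS) (f : L2S) :
    φ.mulLp f =ᵐ[μ𝕋] fun x => φ x * f x := by
  rw [SymbolS.mulLp, pointwiseCLM_apply]
  exact (MemLp.coeFn_toLp _).trans (.of_forall fun _ => by simp)

theorem ae_comp_neg {E : Type*} {f g : 𝕋 → E} (h : f =ᵐ[μ𝕋] g) :
    (fun x => f (-x)) =ᵐ[μ𝕋] fun x => g (-x) :=
  (Measure.measurePreserving_neg μ𝕋).quasiMeasurePreserving.ae_eq_comp h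

def reflConj : L2S →L⋆[ℂ] L2S :=
  ((starL ℂ : ℂ ≃L⋆[ℂ] ℂ) : ℂ →L⋆[ℂ] ℂ).compLpL 2 μ𝕋 ∘SL
    (Lp.compMeasurePreservingₗᵢ ℂ Neg.neg (Measure.measurePreserving_neg μ𝕋)).toContinuousLinearMap

theorem coeFn_reflConj (f : L2S) : reflConj f =ᵐ[μ𝕋] fun x => conj (f (-x)) := by
  filter_upwards [ContinuousLinearMap.coeFn_compLpL (p := 2) (μ := μ𝕋)
      ((starL ℂ : ℂ ≃L⋆[ℂ] ℂ) : ℂ →L⋆[ℂ] ℂ)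
      (Lp.compMeasurePreserving Neg.neg (Measure.measurePreserving_neg μ𝕋) f),
    Lp.coeFn_compMeasurePreserving f (Measure.measurePreserving_neg μ𝕋)] with x h1 h2
  exact h1.trans (by rw [h2]; rfl)

theorem reflConj_reflConj (f : L2S) : reflConj (reflConj f) = f := by
  apply Lp.ext
  filter_upwards [coeFn_reflConj (reflConj f), ae_comp_neg (coeFn_reflConj f)] with x h1 h2
  simp [h1, h2]

theorem inner_reflConj (f g : L2S) : ⟪reflConj f, reflConj g⟫ = conj ⟪f, g⟫ := by
  rw [L2.inner_def, L2.inner_def, ← integral_conj,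
    ← (Measure.measurePreserving_neg μ𝕋).integral_comp (MeasurableEquiv.neg 𝕋).measurableEmbedding
      (fun x => conj ⟪f x, g x⟫)]
  refine integral_congr_ae ?_
  filter_upwards [coeFn_reflConj f, coeFn_reflConj g] with x h1 h2
  simp [h1, h2, mul_comm]

theorem reflConj_fourierLp (k : ℤ) : reflConj (fourierLp 2 k) = fourierLp 2 k := by
  apply Lp.ext
  filter_upwards [coeFn_reflConj (fourierLp 2 k), coeFn_fourierLp 2 k,
    ae_comp_neg (coeFn_fourierLp 2 k)] with x h1 h2 h3
  rw [h1, h3, h2, ← fourier_neg, fourier_apply, fourier_apply, smul_neg, neg_smul, neg_neg]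

theorem reflConj_mem_hardyS_iff {f : L2S} : reflConj f ∈ hardyS ↔ f ∈ hardyS := by
  have h (k : ℤ) : ⟪reflConj f, fourierLp 2 k⟫ = conj ⟪f, fourierLp 2 k⟫ := by
    rw [← inner_reflConj, reflConj_fourierLp]
  simp only [mem_hardyS_iff, h, map_eq_zero]

theorem reflConj_mulLp (φ : SymbolS) (f : L2S) :
    reflConj (φ.mulLp f) = φ.tilde.mulLp (reflConj f) := by
  apply Lp.ext
  filter_upwards [coeFn_reflConj (φ.mulLp f), ae_comp_neg (φ.coeFn_mulLp f),
    φ.tilde.coeFn_mulLp (reflConj f), coeFn_reflConj f] with x h1 h2 h3 h4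
  rw [h1, h2, h3, h4, map_mul]
  rfl

theorem map_reflConj_eq_comap (S : Submodule ℂ L2S) :
    S.map (reflConj : L2S →ₗ⋆[ℂ] L2S) = S.comap (reflConj : L2S →ₗ⋆[ℂ] L2S) := by
  ext f
  constructor
  · rintro ⟨g, hg, rfl⟩
    simpa [reflConj_reflConj] using hg
  · exact fun hf => ⟨reflConj f, hf, reflConj_reflConj f⟩

theorem map_reflConj_iInf {J : Type*} (S : J → Submodule ℂ L2S) :
    (⨅ j, S j).map (reflConj : L2S →ₗ⋆[ℂ] L2S) = ⨅ j, (S j).map (reflConj : L2S →ₗ⋆[ℂ] L2S) := by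
  simp only [map_reflConj_eq_comap, comap_iInf]

theorem map_reflConj_topologicalClosure (S : Submodule ℂ L2S) :
    S.topologicalClosure.map (reflConj : L2S →ₗ⋆[ℂ] L2S)
      = (S.map (reflConj : L2S →ₗ⋆[ℂ] L2S)).topologicalClosure := by
  refine le_antisymm (topologicalClosure_map _ _) (topologicalClosure_minimal _ ?_ ?_)
  · rw [map_reflConj_eq_comap, map_reflConj_eq_comap]
    exact comap_mono S.le_topologicalClosure
  · rw [map_reflConj_eq_comap, comap_coe]
    exact S.isClosed_topologicalClosure.preimage reflConj.continuous

theorem map_reflConj_rangeH2 (φ : SymbolS) :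
    φ.rangeH2.map (reflConj : L2S →ₗ⋆[ℂ] L2S) = φ.tilde.rangeH2 := by
  ext f
  simp only [SymbolS.rangeH2, mem_map]
  constructor
  · rintro ⟨_, ⟨g, hg, rfl⟩, rfl⟩
    exact ⟨reflConj g, reflConj_mem_hardyS_iff.2 hg, (reflConj_mulLp φ g).symm⟩
  · rintro ⟨g, hg, rfl⟩
    refine ⟨φ.mulLp (reflConj g), ⟨reflConj g, reflConj_mem_hardyS_iff.2 hg, rfl⟩, ?_⟩
    simp [reflConj_mulLp, reflConj_reflConj]

theorem rangeH2_tilde_eq_closure_iSup {J : Type*} {θ : J → SymbolS} {θd : SymbolS}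
    (h : θd.rangeH2 = (⨆ i, (θ i).rangeH2).topologicalClosure) :
    θd.tilde.rangeH2 = (⨆ i, (θ i).tilde.rangeH2).topologicalClosure := by
  rw [← map_reflConj_rangeH2, h, map_reflConj_topologicalClosure, Submodule.map_iSup]
  simp only [map_reflConj_rangeH2]

theorem rangeH2_tilde_eq_iInf {J : Type*} {θ : J → SymbolS} {θm : SymbolS}
    (h : θm.rangeH2 = ⨅ i, (θ i).rangeH2) :
    θm.tilde.rangeH2 = ⨅ i, (θ i).tilde.rangeH2 := by
  rw [← map_reflConj_rangeH2, h, map_reflConj_iInf]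
  simp only [map_reflConj_rangeH2]

section

variable {ι : Type} [Fintype ι]

def coordL2 (i : ι) : L2 ι →L[ℂ] L2S := (EuclideanSpace.proj i : V ι →L[ℂ] ℂ).compLpL 2 μ𝕋

def singleL2 [DecidableEq ι] (i : ι) : L2S →L[ℂ] L2 ι :=
  (ContinuousLinearMap.toSpanSingleton ℂ (EuclideanSpace.single i 1 : V ι)).compLpL 2 μ𝕋

theorem coeFn_coordL2 (i : ι) (f : L2 ι) : coordL2 i f =ᵐ[μ𝕋] fun x => f x i :=
  ContinuousLinearMap.coeFn_compLpL _ f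

theorem coeFn_singleL2 [DecidableEq ι] (i : ι) (g : L2S) :
    singleL2 i g =ᵐ[μ𝕋] fun x => g x • EuclideanSpace.single i 1 :=
  ContinuousLinearMap.coeFn_compLpL _ g

theorem ext_coordL2 {f g : L2 ι} (h : ∀ i, coordL2 i f = coordL2 i g) : f = g := by
  apply Lp.ext
  have hcoord : ∀ᵐ x ∂μ𝕋, ∀ i, f x i = g x i := by
    refine ae_all_iff.2 fun i => ?_
    filter_upwards [coeFn_coordL2 i f, coeFn_coordL2 i g] with x h1 h2
    rw [← h1, ← h2, h i]
  filter_upwards [hcoord] with x hx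
  exact PiLp.ext hx

theorem coordL2_singleL2 [DecidableEq ι] (k i : ι) (g : L2S) :
    coordL2 k (singleL2 i g) = if k = i then g else 0 := by
  apply Lp.ext
  filter_upwards [coeFn_coordL2 k (singleL2 i g), coeFn_singleL2 i g,
    Lp.coeFn_zero ℂ 2 μ𝕋] with x h1 h2 h3
  split_ifs with hki
  · subst hki
    simp [h1, h2]
  · rw [h1, h2, h3]
    simp [hki]

theorem coordL2_sum_singleL2 [DecidableEq ι] (g : ι → L2S) (k : ι) :
    coordL2 k (∑ i, singleL2 i (g i)) = g k := by
  simp [map_sum, coordL2_singleL2]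

theorem sum_singleL2_coordL2 [DecidableEq ι] (f : L2 ι) : ∑ i, singleL2 i (coordL2 i f) = f :=
  ext_coordL2 fun k => coordL2_sum_singleL2 _ k

theorem inner_fourierV [DecidableEq ι] (f : L2 ι) (k : ℤ) (i : ι) :
    ⟪f, fourierV ι k i⟫ = ⟪coordL2 i f, fourierLp 2 k⟫ := by
  rw [L2.inner_def, L2.inner_def]
  refine integral_congr_ae ?_
  have hV : fourierV ι k i =ᵐ[μ𝕋] fun x => fourier k x • EuclideanSpace.single i (1 : ℂ) :=
    ContinuousMap.coeFn_toLp (p := 2) (μ := μ𝕋) (𝕜 := ℂ) _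
  filter_upwards [hV, coeFn_coordL2 i f, coeFn_fourierLp 2 k] with x h1 h2 h3
  rw [h1, h2, h3]
  simp [inner_smul_right, EuclideanSpace.inner_single_right]

theorem mem_hardy_iff {f : L2 ι} : f ∈ hardy ι ↔ ∀ i, coordL2 i f ∈ hardyS := by
  classical
  rw [hardy, negSpan, mem_orthogonal_span_iff]
  simp only [mem_hardyS_iff]
  constructor
  · intro h i k hk
    have := h _ ⟨k, hk, i, rfl⟩
    rwa [inner_fourierV] at this
  · rintro h _ ⟨k, hk, i, rfl⟩
    rw [inner_fourierV]
    exact h i k hk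

theorem Symbol.coeFn_mulLp (Φ : Symbol ι) (f : L2 ι) :
    Φ.mulLp f =ᵐ[μ𝕋] fun x => Φ x (f x) := by
  rw [Symbol.mulLp, pointwiseCLM_apply]
  exact MemLp.coeFn_toLp _

theorem coordL2_mulLp_toMatrix (φ : SymbolS) (i : ι) (f : L2 ι) :
    coordL2 i ((φ.toMatrix ι).mulLp f) = φ.mulLp (coordL2 i f) := by
  apply Lp.ext
  filter_upwards [coeFn_coordL2 i ((φ.toMatrix ι).mulLp f), (φ.toMatrix ι).coeFn_mulLp f,
    φ.coeFn_mulLp (coordL2 i f), coeFn_coordL2 i f] with x h1 h2 h3 h4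
  rw [h1, h2, h3, h4]
  rfl

variable (ι) in
def coordwise (T : Submodule ℂ L2S) : Submodule ℂ (L2 ι) :=
  ⨅ i : ι, T.comap (coordL2 i : L2 ι →ₗ[ℂ] L2S)

theorem mem_coordwise {T : Submodule ℂ L2S} {f : L2 ι} :
    f ∈ coordwise ι T ↔ ∀ i, coordL2 i f ∈ T := by
  simp [coordwise]

theorem coordwise_mono {S T : Submodule ℂ L2S} (h : S ≤ T) : coordwise ι S ≤ coordwise ι T :=
  fun _ hf => mem_coordwise.2 fun i => h (mem_coordwise.1 hf i)

theorem isClosed_coordwise {T : Submodule ℂ L2S} (hT : IsClosed (T : Set L2S)) :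
    IsClosed (coordwise ι T : Set (L2 ι)) := by
  simp only [coordwise, coe_iInf, comap_coe]
  exact isClosed_iInter fun i => hT.preimage (coordL2 i).continuous

theorem map_singleL2_le_coordwise [DecidableEq ι] (T : Submodule ℂ L2S) (i : ι) :
    T.map (singleL2 i : L2S →ₗ[ℂ] L2 ι) ≤ coordwise ι T := by
  rintro _ ⟨g, hg, rfl⟩
  refine mem_coordwise.2 fun k => ?_
  rw [ContinuousLinearMap.coe_coe, coordL2_singleL2]
  split_ifs
  exacts [hg, T.zero_mem]

theorem coordwise_iInf {J : Type*} (S : J → Submodule ℂ L2S) :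
    coordwise ι (⨅ j, S j) = ⨅ j, coordwise ι (S j) := by
  ext f
  simp only [mem_coordwise, mem_iInf]
  exact forall_comm

theorem coordwise_topologicalClosure_iSup {J : Type*} (S : J → Submodule ℂ L2S) :
    coordwise ι (⨆ j, S j).topologicalClosure = (⨆ j, coordwise ι (S j)).topologicalClosure := by
  classical
  refine le_antisymm (fun f hf => ?_) (topologicalClosure_minimal _
    (iSup_le fun j => coordwise_mono ((le_iSup S j).trans (le_topologicalClosure _)))
    (isClosed_coordwise (isClosed_topologicalClosure _)))
  rw [← sum_singleL2_coordL2 f]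
  refine sum_mem fun i _ => ?_
  have hmap : (⨆ j, S j).map (singleL2 i : L2S →ₗ[ℂ] L2 ι) ≤ ⨆ j, coordwise ι (S j) := by
    rw [Submodule.map_iSup]
    exact iSup_mono fun j => map_singleL2_le_coordwise (S j) i
  exact topologicalClosure_mono hmap
    (topologicalClosure_map (singleL2 i) _ (mem_map_of_mem (mem_coordwise.1 hf i)))

theorem rangeH2_toMatrix (φ : SymbolS) : (φ.toMatrix ι).rangeH2 = coordwise ι φ.rangeH2 := by
  classical
  ext f
  simp only [mem_coordwise, Symbol.rangeH2, SymbolS.rangeH2, mem_map, ContinuousLinearMap.coe_coe]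
  constructor
  · rintro ⟨g, hg, rfl⟩ i
    exact ⟨coordL2 i g, mem_hardy_iff.1 hg i, (coordL2_mulLp_toMatrix φ i g).symm⟩
  · intro h
    choose g hg hgf using h
    refine ⟨∑ i, singleL2 i (g i), mem_hardy_iff.2 fun k => ?_, ext_coordL2 fun k => ?_⟩
    · rw [coordL2_sum_singleL2]
      exact hg k
    · rw [coordL2_mulLp_toMatrix, coordL2_sum_singleL2, hgf]

theorem rangeH2_toMatrix_eq_closure_iSup {J : Type*} {θ : J → SymbolS} {θd : SymbolS}
    (h : θd.rangeH2 = (⨆ i, (θ i).rangeH2).topologicalClosure) :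
    (θd.toMatrix ι).rangeH2 = (⨆ i, ((θ i).toMatrix ι).rangeH2).topologicalClosure := by
  simp only [rangeH2_toMatrix, h, coordwise_topologicalClosure_iSup]

theorem rangeH2_toMatrix_eq_iInf {J : Type*} {θ : J → SymbolS} {θm : SymbolS}
    (h : θm.rangeH2 = ⨅ i, (θ i).rangeH2) :
    (θm.toMatrix ι).rangeH2 = ⨅ i, ((θ i).toMatrix ι).rangeH2 := by
  simp only [rangeH2_toMatrix, h, coordwise_iInf]

end

theorem statement4_general (ι : Type) [Fintype ι] {J : Type*} (θ : J → SymbolS)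
    (θd θm : SymbolS)
    (hGCD : θd.rangeH2 = (⨆ i, (θ i).rangeH2).topologicalClosure)
    (hLCM : θm.rangeH2 = ⨅ i, (θ i).rangeH2) :
    ((θd.toMatrix ι).rangeH2
        = (⨆ i, ((θ i).toMatrix ι).rangeH2).topologicalClosure ∧
      (θd.tilde.toMatrix ι).rangeH2
        = (⨆ i, ((θ i).tilde.toMatrix ι).rangeH2).topologicalClosure) ∧
    ((θm.toMatrix ι).rangeH2 = ⨅ i, ((θ i).toMatrix ι).rangeH2 ∧
      (θm.tilde.toMatrix ι).rangeH2 = ⨅ i, ((θ i).tilde.toMatrix ι).rangeH2) :=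
  ⟨⟨rangeH2_toMatrix_eq_closure_iSup hGCD,
      rangeH2_toMatrix_eq_closure_iSup (rangeH2_tilde_eq_closure_iSup hGCD)⟩,
    rangeH2_toMatrix_eq_iInf hLCM, rangeH2_toMatrix_eq_iInf (rangeH2_tilde_eq_iInf hLCM)⟩

/-- Lemma 2.1. Let `Θ_i := θ_i I_n` for scalar inner functions `θ_i`.
If `θ_d` is a GCD of the `θ_i` (i.e. `θ_d H² = ⋁_i θ_i H²`) then `θ_d I_n` is both the
greatest common left inner divisor and the greatest common right inner divisor of the
family `{Θ_i}` (the right version being expressed through the reflected symbols `θ̃`);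
similarly, if `θ_m` is an LCM of the `θ_i` (i.e. `θ_m H² = ⋂_i θ_i H²`) then `θ_m I_n` is
both the least common left inner multiple and the least common right inner multiple. -/
theorem statement4 (ι : Type) [Fintype ι] {J : Type*} (θ : J → SymbolS)
    (hθ : ∀ i, (θ i).IsInner) (θd θm : SymbolS) (hθd : θd.IsInner) (hθm : θm.IsInner)
    (hGCD : θd.rangeH2 = (⨆ i, (θ i).rangeH2).topologicalClosure)
    (hLCM : θm.rangeH2 = ⨅ i, (θ i).rangeH2) :
    ((θd.toMatrix ι).rangeH2
        = (⨆ i, ((θ i).toMatrix ι).rangeH2).topologicalClosure ∧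
      (θd.tilde.toMatrix ι).rangeH2
        = (⨆ i, ((θ i).tilde.toMatrix ι).rangeH2).topologicalClosure) ∧
    ((θm.toMatrix ι).rangeH2 = ⨅ i, ((θ i).toMatrix ι).rangeH2 ∧
      (θm.tilde.toMatrix ι).rangeH2 = ⨅ i, ((θ i).tilde.toMatrix ι).rangeH2) :=
  statement4_general ι θ θd θm hGCD hLCM

end BlockToeplitz
end
end

section
/- If S, T are bounded operators on a Hilbert space and S is injective, then the reduced minimum modulus satisfies γ(ST) ≥ γ(S)γ(T). -/
open MeasureTheory Complex Real InnerProductSpace Submodule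

set_option maxHeartbeats 1000000
set_option synthInstance.maxHeartbeats 200000

noncomputable section

namespace BlockToeplitz

open Classical in
/-- The reduced minimum modulus of a bounded operator. -/
def redMinModulus {H K : Type*} [NormedAddCommGroup H] [InnerProductSpace ℂ H]
    [NormedAddCommGroup K] [InnerProductSpace ℂ K] (T : H →L[ℂ] K) : ℝ :=
  if T = 0 then 0
  else sInf {r : ℝ | ∃ x : H, x ∈ (LinearMap.ker (T : H →ₗ[ℂ] K))ᗮ ∧ ‖x‖ = 1 ∧ r = ‖T x‖}

/-! Injectivity of `S` gives `ker (ST) = ker T` and `γ(S)‖y‖ ≤ ‖Sy‖` for every `y`, so for a unit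
vector `x ⊥ ker T` we get `‖STx‖ ≥ γ(S)‖Tx‖ ≥ γ(S)γ(T)`. -/

section ReducedMinimumModulus

variable {H K L : Type*} [NormedAddCommGroup H] [InnerProductSpace ℂ H]
  [NormedAddCommGroup K] [InnerProductSpace ℂ K] [NormedAddCommGroup L] [InnerProductSpace ℂ L]

def kerOrthUnitNorms (T : H →L[ℂ] K) : Set ℝ :=
  {r : ℝ | ∃ x : H, x ∈ (LinearMap.ker (T : H →ₗ[ℂ] K))ᗮ ∧ ‖x‖ = 1 ∧ r = ‖T x‖}

theorem redMinModulus_of_ne_zero {T : H →L[ℂ] K} (hT : T ≠ 0) :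
    redMinModulus T = sInf (kerOrthUnitNorms T) :=
  if_neg hT

theorem kerOrthUnitNorms_nonneg (T : H →L[ℂ] K) : ∀ r ∈ kerOrthUnitNorms T, 0 ≤ r :=
  fun _ ⟨_, _, _, hr⟩ => hr ▸ norm_nonneg _

theorem redMinModulus_nonneg (T : H →L[ℂ] K) : 0 ≤ redMinModulus T := by
  by_cases hT : T = 0
  · simp [redMinModulus, hT]
  · exact redMinModulus_of_ne_zero hT ▸ Real.sInf_nonneg (kerOrthUnitNorms_nonneg T)

theorem redMinModulus_mul_norm_le (T : H →L[ℂ] K) {x : H}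
    (hx : x ∈ (LinearMap.ker (T : H →ₗ[ℂ] K))ᗮ) : redMinModulus T * ‖x‖ ≤ ‖T x‖ := by
  by_cases hT : T = 0
  · simp [redMinModulus, hT]
  rcases eq_or_ne x 0 with rfl | hx0
  · simp
  have hnx : 0 < ‖x‖ := norm_pos_iff.mpr hx0
  have hle : redMinModulus T ≤ ‖x‖⁻¹ * ‖T x‖ := by
    rw [redMinModulus_of_ne_zero hT]
    refine csInf_le ⟨0, kerOrthUnitNorms_nonneg T⟩
      ⟨‖x‖⁻¹ • x, Submodule.smul_mem _ _ hx, norm_smul_inv_norm hx0, ?_⟩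
    rw [T.map_smul_of_tower, norm_smul, norm_inv, norm_norm]
  calc _ ≤ ‖x‖⁻¹ * ‖T x‖ * ‖x‖ := mul_le_mul_of_nonneg_right hle hnx.le
    _ = ‖T x‖ := by field_simp

theorem eq_zero_iff_of_ker_eq {A : H →L[ℂ] K} {B : H →L[ℂ] L}
    (hker : LinearMap.ker (A : H →ₗ[ℂ] K) = LinearMap.ker (B : H →ₗ[ℂ] L)) : A = 0 ↔ B = 0 := by
  simp only [← ContinuousLinearMap.coe_inj, ContinuousLinearMap.coe_zero, ← LinearMap.ker_eq_top,
    hker]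

theorem kerOrthUnitNorms_eq_empty_of_ker_eq {A : H →L[ℂ] K} {B : H →L[ℂ] L}
    (hker : LinearMap.ker (A : H →ₗ[ℂ] K) = LinearMap.ker (B : H →ₗ[ℂ] L))
    (hB : kerOrthUnitNorms B = ∅) : kerOrthUnitNorms A = ∅ := by
  simp only [kerOrthUnitNorms, Set.eq_empty_iff_forall_notMem, Set.mem_setOf_eq, hker] at hB ⊢
  exact fun _ ⟨x, hx, hx1, _⟩ => hB _ ⟨x, hx, hx1, rfl⟩

theorem mul_redMinModulus_le_of_ker_eq {A : H →L[ℂ] K} {B : H →L[ℂ] L}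
    (hker : LinearMap.ker (A : H →ₗ[ℂ] K) = LinearMap.ker (B : H →ₗ[ℂ] L)) {c : ℝ}
    (hc : 0 ≤ c) (hAB : ∀ x, c * ‖A x‖ ≤ ‖B x‖) :
    c * redMinModulus A ≤ redMinModulus B := by
  by_cases hB : B = 0
  · simp [redMinModulus, (eq_zero_iff_of_ker_eq hker).mpr hB, hB]
  have hA : A ≠ 0 := mt (eq_zero_iff_of_ker_eq hker).mp hB
  rw [redMinModulus_of_ne_zero hB]
  rcases (kerOrthUnitNorms B).eq_empty_or_nonempty with hempty | hne
  · -- Without completeness `(ker B)ᗮ` may have no unit vector; then both infima are `sInf ∅ = 0`.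
    rw [hempty, redMinModulus_of_ne_zero hA, kerOrthUnitNorms_eq_empty_of_ker_eq hker hempty,
      Real.sInf_empty, mul_zero]
  refine le_csInf hne ?_
  rintro _ ⟨x, hx, hx1, rfl⟩
  rw [← hker] at hx
  calc c * redMinModulus A = c * (redMinModulus A * ‖x‖) := by rw [hx1, mul_one]
    _ ≤ c * ‖A x‖ := mul_le_mul_of_nonneg_left (redMinModulus_mul_norm_le A hx) hc
    _ ≤ ‖B x‖ := hAB x

end ReducedMinimumModulus

theorem statement12_general {H : Type*} [NormedAddCommGroup H] [InnerProductSpace ℂ H]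
    (S T : H →L[ℂ] H) (hS : Function.Injective S) :
    redMinModulus S * redMinModulus T ≤ redMinModulus (S.comp T) := by
  have hkerS : LinearMap.ker (S : H →ₗ[ℂ] H) = ⊥ := LinearMap.ker_eq_bot.mpr hS
  refine mul_redMinModulus_le_of_ker_eq ?_ (redMinModulus_nonneg S) fun x => ?_
  · exact (LinearMap.ker_comp_of_ker_eq_bot _ hkerS).symm
  · exact redMinModulus_mul_norm_le S (by simp [hkerS])

/-- **Statement 12.** If `S, T` are bounded operators on a Hilbert space and `S` is
injective, then `γ(ST) ≥ γ(S)γ(T)`. -/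
theorem statement12 {H : Type*} [NormedAddCommGroup H] [InnerProductSpace ℂ H]
    [CompleteSpace H] (S T : H →L[ℂ] H) (hS : Function.Injective S) :
    redMinModulus S * redMinModulus T ≤ redMinModulus (S.comp T) :=
  statement12_general S T hS

end BlockToeplitz
end
end
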